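/- (σx simulation by measurements of (X-Y)/√2, Z⊗X, (X-Y)/√2) Let |y_s⟩ = (|0⟩ + (-1)^s·e^{-iπ/4}|1⟩)/√2 for s ∈ {0,1}; these are unit eigenvectors of the observable (σx - σy)/√2 with eigenvalue (-1)^s. Work in ℂ²⊗ℂ² with the ancilla qubit a as the first tensor factor and the data qubit b as the second. For all s₁, s₂, s₃ ∈ {0,1} and every φ ∈ ℂ²: (|y_{s₃}⟩⟨y_{s₃}| ⊗ I) · ((I⊗I + (-1)^{s₂}·σz⊗σx)/2) · (|y_{s₁}⟩ ⊗ φ) = (-1)^{s₂·(s₁ XOR s₃)} · (1/2) · |y_{s₃}⟩ ⊗ (σx^{s₁ XOR s₃} φ). In particular the resulting data-qubit state is φ if s₁ = s₃ and σx·φ if s₁ ≠ s₃, each branch having squared norm ‖φ‖²/4. -/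

import Mathlib

/-!
`σz` swaps the two eigenvectors `|y_0⟩, |y_1⟩` of `(σx - σy)/√2`, so the `σz ⊗ σx` projector
sends `|y_s⟩ ⊗ φ` to `½ (|y_s⟩ ⊗ φ ± |y_{s+1}⟩ ⊗ σx φ)`. Since `|y_0⟩, |y_1⟩` are orthonormal, the
final projector onto `|y_{s₃}⟩` keeps exactly one of the two terms: the first if `s₃ = s₁`, the
second if `s₃ = s₁ + 1`. The norm identity follows because `|y_s⟩` is a unit vector and `σx` only
permutes coordinates.
-/

open Matrix Complex
open scoped Real Kronecker

noncomputable section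

/-- The Pauli matrix σx. -/
def σx : Matrix (Fin 2) (Fin 2) ℂ := !![0, 1; 1, 0]

/-- The Pauli matrix σy. -/
def σy : Matrix (Fin 2) (Fin 2) ℂ := !![0, -Complex.I; Complex.I, 0]

/-- The Pauli matrix σz. -/
def σz : Matrix (Fin 2) (Fin 2) ℂ := !![1, 0; 0, -1]

/-- The computational basis vector `|s⟩` of ℂ². -/
def ket (s : Fin 2) : Fin 2 → ℂ := fun i => if i = s then 1 else 0

/-- The eigenvector `|y_s⟩ = (|0⟩ + (-1)^s·e^{-iπ/4}|1⟩)/√2` of the observable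
`(σx - σy)/√2`, with eigenvalue `(-1)^s`. -/
def kety (s : Fin 2) : Fin 2 → ℂ := fun i =>
  if i = 0 then ((Real.sqrt 2 : ℂ))⁻¹
  else ((-1 : ℂ) ^ (s : ℕ)) * Complex.exp (-(Complex.I * (π / 4 : ℝ))) * ((Real.sqrt 2 : ℂ))⁻¹

/-- The rank-one projector `|y_s⟩⟨y_s|`. -/
def projy (s : Fin 2) : Matrix (Fin 2) (Fin 2) ℂ :=
  Matrix.of fun i j => kety s i * (starRingEnd ℂ) (kety s j)

/-- The tensor product of two vectors of ℂ². -/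
def tp (φ ψ : Fin 2 → ℂ) : Fin 2 × Fin 2 → ℂ := fun p => φ p.1 * ψ p.2

lemma tp_zero_left (v : Fin 2 → ℂ) : tp 0 v = 0 := by
  funext p; simp [tp]

lemma kronecker_mulVec_tp (A B : Matrix (Fin 2) (Fin 2) ℂ) (u v : Fin 2 → ℂ) :
    (A ⊗ₖ B) *ᵥ tp u v = tp (A *ᵥ u) (B *ᵥ v) := by
  funext p
  simp only [mulVec, dotProduct, tp, kroneckerMap_apply, Fintype.sum_prod_type, Finset.sum_mul_sum]
  exact Finset.sum_congr rfl fun i _ => Finset.sum_congr rfl fun j _ => by ring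

lemma sum_norm_sq_smul_tp (c : ℂ) (u v : Fin 2 → ℂ) :
    ∑ p : Fin 2 × Fin 2, ‖(c • tp u v) p‖ ^ 2
      = ‖c‖ ^ 2 * ((∑ i, ‖u i‖ ^ 2) * ∑ j, ‖v j‖ ^ 2) := by
  simp only [Pi.smul_apply, smul_eq_mul, tp, norm_mul, mul_pow, Fintype.sum_prod_type,
    ← Finset.mul_sum, Finset.sum_mul_sum]

lemma conj_exp_neg_I_mul_mul_self (x : ℝ) :
    starRingEnd ℂ (exp (-(I * x))) * exp (-(I * x)) = 1 := by
  rw [← exp_conj, ← exp_add]; simp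

lemma norm_exp_neg_I_mul (x : ℝ) : ‖exp (-(I * x))‖ = 1 := by
  rw [← neg_mul, mul_comm]; simpa using norm_exp_ofReal_mul_I (-x)

lemma inv_sqrt_two_mul_self : ((Real.sqrt 2 : ℂ))⁻¹ * ((Real.sqrt 2 : ℂ))⁻¹ = 2⁻¹ := by
  rw [← mul_inv, ← ofReal_mul, Real.mul_self_sqrt zero_le_two]
  norm_num

lemma σz_mulVec_kety (s : Fin 2) : σz *ᵥ kety s = kety (s + 1) := by
  funext i
  fin_cases s <;> fin_cases i <;> simp [σz, kety, mulVec, dotProduct]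

lemma star_kety_dotProduct_kety (t s : Fin 2) :
    star (kety t) ⬝ᵥ kety s = if s = t then 1 else 0 := by
  have hω := conj_exp_neg_I_mul_mul_self (π / 4)
  have hr := inv_sqrt_two_mul_self
  fin_cases t <;> fin_cases s <;>
    simp only [dotProduct, Fin.sum_univ_two, Pi.star_apply, RCLike.star_def, kety, Fin.isValue,
      Fin.zero_eta, Fin.mk_one, Fin.val_zero, Fin.val_one, ↓reduceIte, one_ne_zero, zero_ne_one,
      pow_zero, pow_one, map_mul, map_neg, map_one, map_inv₀, conj_ofReal]
  · linear_combination ((Real.sqrt 2 : ℂ))⁻¹ ^ 2 * hω + 2 * hr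
  · linear_combination -((Real.sqrt 2 : ℂ))⁻¹ ^ 2 * hω
  · linear_combination -((Real.sqrt 2 : ℂ))⁻¹ ^ 2 * hω
  · linear_combination ((Real.sqrt 2 : ℂ))⁻¹ ^ 2 * hω + 2 * hr

lemma projy_eq_vecMulVec (t : Fin 2) : projy t = vecMulVec (kety t) (star (kety t)) := rfl

lemma projy_mulVec_kety (t s : Fin 2) : projy t *ᵥ kety s = if s = t then kety t else 0 := by
  rw [projy_eq_vecMulVec, vecMulVec_mulVec, op_smul_eq_smul, star_kety_dotProduct_kety]
  split_ifs <;> simp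

lemma sum_norm_sq_kety (s : Fin 2) : ∑ i, ‖kety s i‖ ^ 2 = 1 := by
  have hr : ‖((Real.sqrt 2 : ℂ))⁻¹‖ ^ 2 = 2⁻¹ := by
    rw [norm_inv, norm_real, Real.norm_of_nonneg (Real.sqrt_nonneg 2), inv_pow,
      Real.sq_sqrt zero_le_two]
  simp only [kety, Fin.sum_univ_two, if_pos, one_ne_zero, if_false, norm_mul, norm_pow, norm_neg,
    norm_one, one_pow, norm_exp_neg_I_mul, one_mul, hr]
  norm_num

lemma σx_mulVec (φ : Fin 2 → ℂ) : σx *ᵥ φ = ![φ 1, φ 0] := by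
  funext i; fin_cases i <;> simp [σx, mulVec, dotProduct]

lemma sum_norm_sq_σx_pow_mulVec (k : ℕ) (φ : Fin 2 → ℂ) :
    ∑ i, ‖(σx ^ k *ᵥ φ) i‖ ^ 2 = ∑ i, ‖φ i‖ ^ 2 := by
  induction k generalizing φ with
  | zero => simp
  | succ k ih =>
    rw [pow_succ, ← mulVec_mulVec, ih, σx_mulVec, Fin.sum_univ_two, Fin.sum_univ_two]
    simp [add_comm]

lemma half_one_add_smul_σz_kronecker_σx_mulVec_tp (c : ℂ) (s : Fin 2) (φ : Fin 2 → ℂ) :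
    ((2 : ℂ)⁻¹ • (1 + c • σz ⊗ₖ σx)) *ᵥ tp (kety s) φ
      = (2 : ℂ)⁻¹ • (tp (kety s) φ + c • tp (kety (s + 1)) (σx *ᵥ φ)) := by
  rw [smul_mulVec, add_mulVec, one_mulVec, smul_mulVec, kronecker_mulVec_tp, σz_mulVec_kety]

lemma fin_two_eq_or_eq_add_one (a b : Fin 2) : b = a ∨ b = a + 1 := by
  fin_cases a <;> fin_cases b <;> decide

/-- Simulation of `σx` by the measurement sequence `((X-Y)/√2)_a`, `Z_a⊗X_b`,
`((X-Y)/√2)_a`: applying the projectors for outcomes `s₂` (observable `σz⊗σx`) and `s₃`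
(observable `(σx-σy)/√2` on the ancilla `a`) to `|y_{s₁}⟩ ⊗ φ` yields
`(-1)^{s₂(s₁⊕s₃)}·(1/2)·|y_{s₃}⟩ ⊗ σx^{s₁⊕s₃} φ`;
in particular every branch has squared norm `‖φ‖²/4`. -/
theorem sigma_x_simulation (s₁ s₂ s₃ : Fin 2) (φ : Fin 2 → ℂ) :
    ((projy s₃ ⊗ₖ (1 : Matrix (Fin 2) (Fin 2) ℂ)).mulVec
      (((2 : ℂ)⁻¹ • ((1 : Matrix (Fin 2 × Fin 2) (Fin 2 × Fin 2) ℂ)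
          + ((-1 : ℂ) ^ (s₂ : ℕ)) • (σz ⊗ₖ σx))).mulVec
        (tp (kety s₁) φ))
      = (((-1 : ℂ) ^ ((s₂ : ℕ) * ((s₁ + s₃ : Fin 2) : ℕ))) * (2 : ℂ)⁻¹) •
          tp (kety s₃) ((σx ^ ((s₁ + s₃ : Fin 2) : ℕ)).mulVec φ)) ∧
    (∑ p : Fin 2 × Fin 2,
        ‖((((-1 : ℂ) ^ ((s₂ : ℕ) * ((s₁ + s₃ : Fin 2) : ℕ))) * (2 : ℂ)⁻¹) •
          tp (kety s₃) ((σx ^ ((s₁ + s₃ : Fin 2) : ℕ)).mulVec φ)) p‖ ^ 2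
      = (∑ i : Fin 2, ‖φ i‖ ^ 2) / 4) := by
  refine ⟨?_, ?_⟩
  · rw [half_one_add_smul_σz_kronecker_σx_mulVec_tp, mulVec_smul, mulVec_add, mulVec_smul,
      kronecker_mulVec_tp, kronecker_mulVec_tp, one_mulVec, one_mulVec, projy_mulVec_kety,
      projy_mulVec_kety]
    rcases fin_two_eq_or_eq_add_one s₁ s₃ with rfl | rfl
    · have h : s₃ + s₃ = 0 := by fin_cases s₃ <;> rfl
      have h' : s₃ + 1 ≠ s₃ := by fin_cases s₃ <;> decide
      simp only [if_pos, if_neg h', h, tp_zero_left, smul_zero, add_zero, Fin.val_zero, mul_zero,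
        pow_zero, one_mul, one_mulVec]
    · have h : s₁ + (s₁ + 1) = 1 := by fin_cases s₁ <;> rfl
      have h' : s₁ ≠ s₁ + 1 := by fin_cases s₁ <;> decide
      simp only [if_pos, if_neg h', h, tp_zero_left, zero_add, Fin.val_one, mul_one, pow_one,
        smul_smul, mul_comm]
  · rw [sum_norm_sq_smul_tp, sum_norm_sq_kety, sum_norm_sq_σx_pow_mulVec]
    simp only [norm_mul, norm_pow, norm_neg, norm_one, one_pow, one_mul, norm_inv, norm_ofNat]
    ring
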